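/- arXiv:2302.12022 — 5 statements merged into one kernel-verified Lean document; each statement's English description precedes it below -/
import Mathlib

section
/- Let $s_0, s_1, \ldots, s_T$ be a positive nondecreasing sequence of real numbers. Then $\max_{t \le T} \sum_{i < t} \frac{s_i}{s_t} \ge \frac{1}{e}\left(\frac{T}{1 + \log(s_T/s_0)} - 1\right)$. -/
open Finset

/-- Lemma 3 of the paper: for a positive nondecreasing sequence `s₀,…,s_T`,
`max_{t ≤ T} ∑_{i < t} s_i / s_t ≥ (1/e) (T / (1 + log (s_T / s_0)) - 1)`. -/
theorem dog_bound_a_ratios (T : ℕ) (s : ℕ → ℝ)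
    (hpos : ∀ i ≤ T, 0 < s i)
    (hmono : ∀ i, i < T → s i ≤ s (i + 1)) :
    ∃ t ≤ T,
      (1 / Real.exp 1) * ((T : ℝ) / (1 + Real.log (s T / s 0)) - 1)
        ≤ ∑ i ∈ Finset.range t, s i / s t := by
  have mono : ∀ i j, i ≤ j → j ≤ T → s i ≤ s j := by
    intro i j hij hjT
    induction j with
    | zero => simp [Nat.le_zero.mp hij]
    | succ n ih =>
      rcases Nat.lt_or_ge i (n+1) with h | h
      · exact le_trans (ih (Nat.lt_succ_iff.mp h) (le_trans (Nat.le_succ n) hjT))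
          (hmono n (Nat.lt_of_succ_le hjT))
      · have : i = n+1 := le_antisymm hij h
        simp [this]
  set L := Real.log (s T / s 0) with hLdef
  have hs0 : 0 < s 0 := hpos 0 (Nat.zero_le T)
  have hsT : 0 < s T := hpos T le_rfl
  have hL0 : 0 ≤ L := Real.log_nonneg (by
    rw [le_div_iff₀ hs0]; simpa using mono 0 T (Nat.zero_le T) le_rfl)
  set K := ⌊L⌋₊ + 1 with hKdef
  have hKpos : 0 < K := Nat.succ_pos _
  have hKL : (K : ℝ) ≤ 1 + L := by
    push_cast [hKdef]; linarith [Nat.floor_le hL0]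
  have hKposR : (0:ℝ) < K := by exact_mod_cast hKpos
  -- pigeonhole
  have maps : ∀ x ∈ Finset.range (T+1),
      ⌊Real.log (s x / s 0)⌋₊ ∈ Finset.range K := by
    intro x hx
    rw [Finset.mem_range] at hx ⊢
    have hx' : x ≤ T := Nat.lt_succ_iff.mp hx
    have hlog : Real.log (s x / s 0) ≤ L := by
      apply Real.log_le_log (div_pos (hpos x hx') hs0)
      exact div_le_div_of_nonneg_right (mono x T hx' le_rfl) hs0.le
    calc ⌊Real.log (s x / s 0)⌋₊ ≤ ⌊L⌋₊ := Nat.floor_le_floor hlog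
      _ < K := Nat.lt_succ_self _
  obtain ⟨k, -, hcard⟩ :=
    Finset.exists_lt_card_fiber_of_mul_lt_card_of_maps_to (n := T / K) maps
      (by
        rw [Finset.card_range, Finset.card_range]
        have h1 : T / K * K ≤ T := Nat.div_mul_le_self T K
        have : K * (T / K) ≤ T := by rwa [Nat.mul_comm]
        omega)
  set F := (Finset.range (T+1)).filter
      (fun x => ⌊Real.log (s x / s 0)⌋₊ = k) with hF
  have hFne : F.Nonempty := Finset.card_pos.mp (lt_of_le_of_lt (Nat.zero_le _) hcard)
  set a := F.min' hFne with ha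
  set b := F.max' hFne with hb
  have haF : a ∈ F := F.min'_mem hFne
  have hbF : b ∈ F := F.max'_mem hFne
  have hab : a ≤ b := F.min'_le _ hbF
  have hbT : b ≤ T := by
    have := (Finset.mem_filter.mp hbF).1
    rw [Finset.mem_range] at this; omega
  have haT : a ≤ T := le_trans hab hbT
  -- card bound : F ⊆ Icc a b
  have hsub : F ⊆ Finset.Icc a b := fun x hx =>
    Finset.mem_Icc.mpr ⟨F.min'_le x hx, F.le_max' x hx⟩
  have hcardIcc : F.card ≤ b - a + 1 := by
    have := Finset.card_le_card hsub
    rw [Nat.card_Icc] at this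
    omega
  have hba : T / K ≤ b - a := by omega
  -- ratio bound : s b ≤ e * s a
  have hspos : ∀ i ≤ T, 0 < s i := hpos
  have hsa := hpos a haT
  have hsb := hpos b hbT
  have hka : ⌊Real.log (s a / s 0)⌋₊ = k := (Finset.mem_filter.mp haF).2
  have hkb : ⌊Real.log (s b / s 0)⌋₊ = k := (Finset.mem_filter.mp hbF).2
  have hla : 0 ≤ Real.log (s a / s 0) := Real.log_nonneg (by
    rw [le_div_iff₀ hs0]; simpa using mono 0 a (Nat.zero_le a) haT)
  have hlogab : Real.log (s b / s 0) - Real.log (s a / s 0) < 1 := by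
    have h1 : Real.log (s b / s 0) < k + 1 := by
      have := Nat.lt_floor_add_one (Real.log (s b / s 0))
      rw [hkb] at this; exact_mod_cast this
    have h2 : (k : ℝ) ≤ Real.log (s a / s 0) := by
      have := Nat.floor_le hla
      rw [hka] at this; exact_mod_cast this
    linarith
  have hratio : Real.exp (-1) ≤ s a / s b := by
    have h1 : Real.log (s b / s a) < 1 := by
      rw [Real.log_div (ne_of_gt hsb) (ne_of_gt hsa)]
      rw [Real.log_div (ne_of_gt hsb) (ne_of_gt hs0),
        Real.log_div (ne_of_gt hsa) (ne_of_gt hs0)] at hlogab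
      linarith
    have h2 : s b / s a < Real.exp 1 := by
      calc s b / s a = Real.exp (Real.log (s b / s a)) :=
            (Real.exp_log (div_pos hsb hsa)).symm
        _ < Real.exp 1 := Real.exp_lt_exp.mpr h1
    have h3 : s b < Real.exp 1 * s a := by
      rw [div_lt_iff₀ hsa] at h2; linarith
    have heq : (Real.exp 1)⁻¹ = s a / (Real.exp 1 * s a) := by
      field_simp
    rw [Real.exp_neg, heq]
    gcongr
  -- sum bounds
  refine ⟨b, hbT, ?_⟩
  have hsum2 : ((b - a : ℕ) : ℝ) * Real.exp (-1) ≤ ∑ i ∈ Finset.Ico a b, s i / s b := by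
    have := Finset.card_nsmul_le_sum (Finset.Ico a b) (fun i => s i / s b) (Real.exp (-1))
      (fun i hi => by
        rw [Finset.mem_Ico] at hi
        have hiT : i ≤ T := le_trans (le_of_lt hi.2) hbT
        calc Real.exp (-1) ≤ s a / s b := hratio
          _ ≤ s i / s b := by gcongr; exact mono a i hi.1 hiT)
    rwa [Nat.card_Ico, nsmul_eq_mul] at this
  have hsum1 : ∑ i ∈ Finset.Ico a b, s i / s b ≤ ∑ i ∈ Finset.range b, s i / s b := by
    apply Finset.sum_le_sum_of_subset_of_nonneg
    · intro x hx
      rw [Finset.mem_Ico] at hx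
      exact Finset.mem_range.mpr hx.2
    · intro i hi _
      rw [Finset.mem_range] at hi
      exact le_of_lt (div_pos (hpos i (le_trans (le_of_lt hi) hbT)) hsb)
  have h5 : (T:ℝ)/(1+L) - 1 ≤ ((b-a:ℕ):ℝ) := by
    have h6 : (T:ℝ)/(1+L) ≤ (T:ℝ)/K :=
      div_le_div_of_nonneg_left (by positivity) hKposR hKL
    have h7 : (T:ℝ) < (K:ℝ) * ((T/K : ℕ) + 1) := by
      exact_mod_cast Nat.lt_mul_div_succ T hKpos
    have h8 : (T:ℝ)/K < ((T/K:ℕ):ℝ) + 1 := by rw [div_lt_iff₀ hKposR]; linarith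
    have h9 : ((T/K:ℕ):ℝ) ≤ ((b-a:ℕ):ℝ) := by exact_mod_cast hba
    linarith
  calc (1 / Real.exp 1) * ((T : ℝ) / (1 + L) - 1)
      ≤ (1 / Real.exp 1) * ((b-a:ℕ):ℝ) := by
        apply mul_le_mul_of_nonneg_left h5 (by positivity)
    _ = ((b-a:ℕ):ℝ) * Real.exp (-1) := by rw [Real.exp_neg]; ring
    _ ≤ ∑ i ∈ Finset.Ico a b, s i / s b := hsum2
    _ ≤ ∑ i ∈ Finset.range b, s i / s b := hsum1
end

section
/- Let $a_{-1}, a_0, a_1, \ldots, a_t$ be a nondecreasing sequence of positive real numbers. Then $\sum_{k=0}^{t} \frac{a_k - a_{k-1}}{a_k\,(1 + \log(a_k/a_{-1}))^2} \le 1$. -/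
/-!
Put `u_k = 1 + log (a_k / a₋₁) ≥ 1`. Concavity of `log` gives
`(a_k - a_{k-1}) / a_k ≤ log (a_k / a_{k-1}) = u_k - u_{k-1}`, so the `k`-th term is at most
`(u_k - u_{k-1}) / u_k² ≤ 1 / u_{k-1} - 1 / u_k`, and the sum telescopes to at most `1 / u₋₁ = 1`.
-/

open Finset Real

lemma div_sq_le_inv_sub_inv {u v d : ℝ} (hu : 0 < u) (hd : 0 ≤ d) (hdv : d ≤ v - u) :
    d / v ^ 2 ≤ u⁻¹ - v⁻¹ := by
  have hv : 0 < v := by linarith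
  calc d / v ^ 2 ≤ (v - u) / (u * v) := by
        gcongr
        · linarith
        · nlinarith
    _ = u⁻¹ - v⁻¹ := by field_simp

lemma sub_div_le_log_div {x y : ℝ} (hx : 0 < x) (hy : 0 < y) : (y - x) / y ≤ log (y / x) := by
  have := one_sub_inv_le_log_of_pos (div_pos hy hx)
  rwa [inv_div, one_sub_div hy.ne'] at this

lemma sub_div_mul_one_add_log_sq_le_inv_sub_inv {c x y : ℝ} (hc : 0 < c) (hx : 0 < x)
    (hxy : x ≤ y) (hxc : 0 < 1 + log (x / c)) :
    (y - x) / (y * (1 + log (y / c)) ^ 2) ≤ (1 + log (x / c))⁻¹ - (1 + log (y / c))⁻¹ := by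
  have hy : 0 < y := hx.trans_le hxy
  have hlog : log (y / c) - log (x / c) = log (y / x) := by
    rw [log_div hy.ne' hc.ne', log_div hx.ne' hc.ne', log_div hy.ne' hx.ne']
    ring
  rw [← div_div]
  apply div_sq_le_inv_sub_inv hxc (div_nonneg (sub_nonneg.2 hxy) hy.le)
  linarith [sub_div_le_log_div hx hy]

/-- Indices are shifted: `a 0` is the paper's `a₋₁` and `a (k + 1)` its `a_k`. -/
theorem log_weighted_increment_sum (t : ℕ) (a : ℕ → ℝ)
    (hpos : ∀ k, k ≤ t + 1 → 0 < a k)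
    (hmono : ∀ k, k ≤ t → a k ≤ a (k + 1)) :
    ∑ k ∈ Finset.range (t + 1),
        (a (k + 1) - a k) / (a (k + 1) * (1 + Real.log (a (k + 1) / a 0)) ^ 2)
      ≤ 1 := by
  set u : ℕ → ℝ := fun k => 1 + log (a k / a 0)
  have ha0 : 0 < a 0 := hpos 0 (Nat.zero_le _)
  have hmonoOn : MonotoneOn a (Set.Iic (t + 1)) :=
    monotoneOn_of_le_add_one Set.ordConnected_Iic fun k _ _ hk => hmono k (by simpa using hk)
  have hu_pos : ∀ k ≤ t + 1, 0 < u k := fun k hk => by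
    have : 0 ≤ log (a k / a 0) :=
      log_nonneg ((one_le_div ha0).2 (hmonoOn (by simp) hk (Nat.zero_le _)))
    positivity
  calc _ ≤ ∑ k ∈ range (t + 1), ((u k)⁻¹ - (u (k + 1))⁻¹) := by
        refine sum_le_sum fun k hk => ?_
        have hk : k ≤ t := Nat.lt_succ_iff.1 (mem_range.1 hk)
        exact sub_div_mul_one_add_log_sq_le_inv_sub_inv ha0 (hpos k (by omega)) (hmono k hk)
          (hu_pos k (by omega))
    _ = (u 0)⁻¹ - (u (t + 1))⁻¹ := sum_range_sub' (fun k => (u k)⁻¹) (t + 1)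
    _ ≤ 1 := by
        have hu0 : u 0 = 1 := by simp [u, div_self ha0.ne']
        rw [hu0, inv_one, sub_le_self_iff]
        exact inv_nonneg.2 (hu_pos (t + 1) le_rfl).le
end

section
/- Weighted regret bound for DoG-like schemes: let $\mathcal{X}$ be a closed convex subset of a real Hilbert space, $x^\star \in \mathcal{X}$, and consider iterates $x_{k+1} = \Pi_{\mathcal{X}}(x_k - \eta_k g_k)$ with step sizes $\eta_k = \bar{r}_k/\sqrt{G_k'}$, where $\bar{r}_k = \max(\max_{i \le k}\|x_i - x_0\|, r_\epsilon)$ for some $r_\epsilon > 0$, $G_k = \sum_{i \le k}\|g_i\|^2$, and $G_k'$ is a positive nondecreasing sequence with $G_k' \ge G_k$. Then for all $t \ge 1$, $\sum_{k=0}^{t-1} \bar{r}_k \langle g_k, x_k - x^\star\rangle \le \bar{r}_t\,(2\bar{d}_t + \bar{r}_t)\sqrt{G_{t-1}'}$, where $\bar{d}_t = \max_{k \le t}\|x_k - x^\star\|$. -/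
open Finset
open scoped RealInnerProductSpace

/-! Projecting onto a convex set does not increase the distance to points of the set, so the
`k`-th step gives `2 η_k ⟪g_k, x_k - x⋆⟫ ≤ d_k² - d_{k+1}² + η_k² ‖g_k‖²` with
`d_k = ‖x_k - x⋆‖`; multiplying by `√G'_k / 2` turns the left side into `r̄_k ⟪g_k, x_k - x⋆⟫`.
Summing by parts against the nondecreasing weights `√G'_k`, and using that all iterates up to
time `t` lie within `r̄_t` of `x_0` and within `d̄_t` of `x⋆` (so `d_k² - d_t² ≤ 4 r̄_t d̄_t`),
the distance terms contribute at most `2 r̄_t d̄_t √G'_{t-1}`. The gradient terms are at most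
`r̄_t² / 2 · ∑_k ‖g_k‖² / √G_k ≤ r̄_t² √G_{t-1}`, since
`a / √(S + a) ≤ 2 (√(S + a) - √S)` telescopes. -/

theorem norm_sq_sub_norm_sq_le {E : Type*} [SeminormedAddCommGroup E] (a b : E) :
    ‖a‖ ^ 2 - ‖b‖ ^ 2 ≤ ‖a - b‖ * (‖a‖ + ‖b‖) :=
  calc ‖a‖ ^ 2 - ‖b‖ ^ 2 = (‖a‖ - ‖b‖) * (‖a‖ + ‖b‖) := by ring
    _ ≤ ‖a - b‖ * (‖a‖ + ‖b‖) := by gcongr; exact norm_sub_norm_le a b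

theorem norm_sub_sq_le_norm_sub_sq_add {E : Type*} [SeminormedAddCommGroup E] {a b o z : E}
    {r d : ℝ} (hao : ‖a - o‖ ≤ r) (hbo : ‖b - o‖ ≤ r) (haz : ‖a - z‖ ≤ d) (hbz : ‖b - z‖ ≤ d) :
    ‖a - z‖ ^ 2 ≤ ‖b - z‖ ^ 2 + 4 * r * d := by
  have hab : ‖a - b‖ ≤ 2 * r := by
    have := norm_sub_le_norm_sub_add_norm_sub a o b
    rw [norm_sub_rev o b] at this
    linarith
  have h := norm_sq_sub_norm_sq_le (a - z) (b - z)
  rw [sub_sub_sub_cancel_right] at h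
  have : ‖a - b‖ * (‖a - z‖ + ‖b - z‖) ≤ 2 * r * (2 * d) :=
    mul_le_mul hab (by linarith) (by positivity) ((norm_nonneg _).trans hab)
  linarith

section Projection

variable {F : Type*} [NormedAddCommGroup F] [InnerProductSpace ℝ F] {K : Set F}

theorem Convex.norm_sub_sq_le_of_forall_norm_sub_le (hK : Convex ℝ K) {u p z : F} (hp : p ∈ K)
    (hmin : ∀ y ∈ K, ‖p - u‖ ≤ ‖y - u‖) (hz : z ∈ K) :
    ‖p - z‖ ^ 2 ≤ ‖u - z‖ ^ 2 := by
  have : Nonempty K := ⟨⟨p, hp⟩⟩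
  have hinf : ‖u - p‖ = ⨅ w : K, ‖u - w‖ := by
    refine le_antisymm (le_ciInf fun w => ?_) (ciInf_le ⟨0, ?_⟩ (⟨p, hp⟩ : K))
    · rw [norm_sub_rev u, norm_sub_rev u]
      exact hmin w w.2
    · rintro _ ⟨w, rfl⟩
      exact norm_nonneg _
  have hvar := (norm_eq_iInf_iff_real_inner_le_zero hK hp).1 hinf z hz
  rw [show u - z = (u - p) - (z - p) by abel, norm_sub_sq_real (u - p), norm_sub_rev p z]
  nlinarith [sq_nonneg ‖u - p‖]

theorem Convex.two_mul_inner_le_of_forall_norm_sub_le (hK : Convex ℝ K) {x g p z : F} {η : ℝ}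
    (hp : p ∈ K) (hmin : ∀ y ∈ K, ‖p - (x - η • g)‖ ≤ ‖y - (x - η • g)‖) (hz : z ∈ K) :
    2 * η * ⟪g, x - z⟫ ≤ ‖x - z‖ ^ 2 - ‖p - z‖ ^ 2 + η ^ 2 * ‖g‖ ^ 2 := by
  have h := hK.norm_sub_sq_le_of_forall_norm_sub_le hp hmin hz
  rw [show x - η • g - z = (x - z) - η • g by abel, norm_sub_sq_real (x - z), real_inner_smul_right,
    norm_smul, mul_pow, Real.norm_eq_abs, sq_abs, real_inner_comm] at h
  linarith

theorem Convex.mul_inner_le_of_forall_norm_sub_le (hK : Convex ℝ K) {x g p z : F} {r s : ℝ}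
    (hs : 0 < s) (hp : p ∈ K)
    (hmin : ∀ y ∈ K, ‖p - (x - (r / s) • g)‖ ≤ ‖y - (x - (r / s) • g)‖) (hz : z ∈ K) :
    r * ⟪g, x - z⟫ ≤ (s * (‖x - z‖ ^ 2 - ‖p - z‖ ^ 2) + r ^ 2 * (‖g‖ ^ 2 / s)) / 2 := by
  have h := hK.two_mul_inner_le_of_forall_norm_sub_le hp hmin hz
  have hs' := hs.ne'
  calc r * ⟪g, x - z⟫ = s * (2 * (r / s) * ⟪g, x - z⟫) / 2 := by field_simp
    _ ≤ s * (‖x - z‖ ^ 2 - ‖p - z‖ ^ 2 + (r / s) ^ 2 * ‖g‖ ^ 2) / 2 := by gcongr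
    _ = (s * (‖x - z‖ ^ 2 - ‖p - z‖ ^ 2) + r ^ 2 * (‖g‖ ^ 2 / s)) / 2 := by field_simp

end Projection

theorem Monotone.sum_range_succ_mul_sub_le {s D : ℕ → ℝ} (hs : Monotone s) (hs0 : 0 ≤ s 0)
    {M : ℝ} {n : ℕ} (hD : ∀ k ≤ n, D k ≤ M) :
    ∑ k ∈ range (n + 1), s k * (D k - D (k + 1)) ≤ s n * (M - D (n + 1)) := by
  induction n with
  | zero =>
    rw [sum_range_one]
    exact mul_le_mul_of_nonneg_left (by linarith [hD 0 le_rfl]) hs0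
  | succ n ih =>
    rw [sum_range_succ]
    have hprev := ih fun k hk => hD k (by omega)
    have hgrow : s n * (M - D (n + 1)) ≤ s (n + 1) * (M - D (n + 1)) :=
      mul_le_mul_of_nonneg_right (hs n.le_succ) (by linarith [hD (n + 1) le_rfl])
    linarith

theorem Monotone.sum_range_succ_mul_norm_sub_sq_sub_le {E : Type*} [SeminormedAddCommGroup E]
    {s : ℕ → ℝ} (hs : Monotone s) (hs0 : 0 ≤ s 0) {x : ℕ → E} {o z : E} {r d : ℝ} {n : ℕ}
    (hr : ∀ k ≤ n + 1, ‖x k - o‖ ≤ r) (hd : ∀ k ≤ n + 1, ‖x k - z‖ ≤ d) :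
    ∑ k ∈ range (n + 1), s k * (‖x k - z‖ ^ 2 - ‖x (k + 1) - z‖ ^ 2) ≤ s n * (4 * r * d) := by
  have hD : ∀ k ≤ n, ‖x k - z‖ ^ 2 ≤ ‖x (n + 1) - z‖ ^ 2 + 4 * r * d := fun k hk =>
    norm_sub_sq_le_norm_sub_sq_add (hr k (by omega)) (hr (n + 1) le_rfl) (hd k (by omega))
      (hd (n + 1) le_rfl)
  simpa using hs.sum_range_succ_mul_sub_le hs0 hD

theorem div_sqrt_le_two_mul_sqrt_add_sub_sqrt {a b S : ℝ} (ha : 0 ≤ a) (hS : 0 ≤ S)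
    (hb : S + a ≤ b) : a / √b ≤ 2 * (√(S + a) - √S) := by
  have hgap : 0 ≤ √(S + a) - √S := sub_nonneg.2 (Real.sqrt_le_sqrt (by linarith))
  have hsum : √(S + a) + √S ≤ 2 * √b := by
    linarith [Real.sqrt_le_sqrt hb, Real.sqrt_le_sqrt (show S ≤ b by linarith)]
  refine div_le_of_le_mul₀ (Real.sqrt_nonneg _) (by positivity) ?_
  calc a = (√(S + a) - √S) * (√(S + a) + √S) := by
        linear_combination Real.sq_sqrt hS - Real.sq_sqrt (show 0 ≤ S + a by linarith)
    _ ≤ (√(S + a) - √S) * (2 * √b) := mul_le_mul_of_nonneg_left hsum hgap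
    _ = 2 * (√(S + a) - √S) * √b := by ring

theorem sum_div_sqrt_le_two_mul_sqrt_sum {a b : ℕ → ℝ} (ha : ∀ k, 0 ≤ a k)
    (hb : ∀ k, ∑ i ∈ range (k + 1), a i ≤ b k) (t : ℕ) :
    ∑ k ∈ range t, a k / √(b k) ≤ 2 * √(∑ i ∈ range t, a i) :=
  calc ∑ k ∈ range t, a k / √(b k)
      ≤ ∑ k ∈ range t, 2 * (√(∑ i ∈ range (k + 1), a i) - √(∑ i ∈ range k, a i)) :=
        sum_le_sum fun k _ => by
          rw [sum_range_succ]
          exact div_sqrt_le_two_mul_sqrt_add_sub_sqrt (ha k) (sum_nonneg fun i _ => ha i)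
            (sum_range_succ a k ▸ hb k)
    _ = 2 * √(∑ i ∈ range t, a i) := by
        rw [← mul_sum, sum_range_sub (fun k => √(∑ i ∈ range k, a i))]
        simp

theorem dog_weighted_regret_general {H : Type*} [NormedAddCommGroup H]
    [InnerProductSpace ℝ H]
    (X : Set H) (hXconv : Convex ℝ X)
    (x g : ℕ → H) (xs : H) (hxs : xs ∈ X)
    (rε : ℝ)
    (rbar : ℕ → ℝ)
    (hrbar : ∀ k, rbar k =
      max ((Finset.range (k + 1)).sup' Finset.nonempty_range_add_one
            (fun i => ‖x i - x 0‖)) rε)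
    (G' : ℕ → ℝ)
    (hG'pos : ∀ k, 0 < G' k)
    (hG'mono : ∀ k, G' k ≤ G' (k + 1))
    (hG'ge : ∀ k, (∑ i ∈ Finset.range (k + 1), ‖g i‖ ^ 2) ≤ G' k)
    (hmem : ∀ k, x (k + 1) ∈ X)
    (hproj : ∀ k, ∀ y ∈ X,
      ‖x (k + 1) - (x k - (rbar k / Real.sqrt (G' k)) • g k)‖
        ≤ ‖y - (x k - (rbar k / Real.sqrt (G' k)) • g k)‖)
    (t : ℕ) (ht : 1 ≤ t) :
    ∑ k ∈ Finset.range t, rbar k * ⟪g k, x k - xs⟫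
      ≤ rbar t *
          (2 * ((Finset.range (t + 1)).sup' Finset.nonempty_range_add_one
                  (fun k => ‖x k - xs‖)) + rbar t)
            * Real.sqrt (G' (t - 1)) := by
  obtain ⟨n, rfl⟩ := Nat.exists_eq_add_of_le' ht
  set dbar := (range (n + 1 + 1)).sup' nonempty_range_add_one fun k => ‖x k - xs‖
  set s : ℕ → ℝ := fun k => √(G' k)
  set D : ℕ → ℝ := fun k => ‖x k - xs‖ ^ 2
  have hs : ∀ k, 0 < s k := fun k => Real.sqrt_pos.2 (hG'pos k)
  have hr_ge : ∀ k, ‖x k - x 0‖ ≤ rbar k := fun k =>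
    (hrbar k).symm ▸ le_max_of_le_left (le_sup' (fun i => ‖x i - x 0‖) (self_mem_range_succ k))
  have hr_mono : Monotone rbar := fun a b hab => by
    rw [hrbar, hrbar]
    exact max_le_max (sup'_mono _ (range_subset_range.2 (by omega)) _) le_rfl
  have hd_ge : ∀ k ≤ n + 1, ‖x k - xs‖ ≤ dbar := fun k hk =>
    le_sup' (fun j => ‖x j - xs‖) (mem_range.2 (by omega))
  have hs_mono : Monotone s := monotone_nat_of_le_succ fun k => Real.sqrt_le_sqrt (hG'mono k)
  have hdist : ∑ k ∈ range (n + 1), s k * (D k - D (k + 1)) ≤ s n * (4 * rbar (n + 1) * dbar) :=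
    hs_mono.sum_range_succ_mul_norm_sub_sq_sub_le (hs 0).le
      (fun k hk => (hr_ge k).trans (hr_mono hk)) hd_ge
  have hgrad : ∑ k ∈ range (n + 1), ‖g k‖ ^ 2 / s k ≤ 2 * s n :=
    (sum_div_sqrt_le_two_mul_sqrt_sum (fun k => sq_nonneg ‖g k‖) hG'ge (n + 1)).trans
      (mul_le_mul_of_nonneg_left (Real.sqrt_le_sqrt (hG'ge n)) zero_le_two)
  calc ∑ k ∈ range (n + 1), rbar k * ⟪g k, x k - xs⟫
      ≤ ∑ k ∈ range (n + 1),
          (s k * (D k - D (k + 1)) + rbar (n + 1) ^ 2 * (‖g k‖ ^ 2 / s k)) / 2 :=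
        sum_le_sum fun k hk => by
          refine (hXconv.mul_inner_le_of_forall_norm_sub_le (hs k) (hmem k) (hproj k) hxs).trans ?_
          have := (hs k).le
          gcongr
          · exact (norm_nonneg _).trans (hr_ge k)
          · exact hr_mono (mem_range.1 hk).le
    _ = (∑ k ∈ range (n + 1), s k * (D k - D (k + 1))
          + rbar (n + 1) ^ 2 * ∑ k ∈ range (n + 1), ‖g k‖ ^ 2 / s k) / 2 := by
        rw [← sum_div, sum_add_distrib, mul_sum]
    _ ≤ (s n * (4 * rbar (n + 1) * dbar) + rbar (n + 1) ^ 2 * (2 * s n)) / 2 := by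
        gcongr
    _ = rbar (n + 1) * (2 * dbar + rbar (n + 1)) * √(G' (n + 1 - 1)) := by
        simp only [s, Nat.add_sub_cancel]
        ring

/-- Weighted regret bound for DoG-like schemes (Lemma 1 of the paper):
with `η_k = r̄_k / √(G'_k)`, `r̄_k = max(max_{i ≤ k} ‖x_i - x₀‖, r_ε)`,
`G_k = ∑_{i ≤ k} ‖g_i‖²`, `G'` positive nondecreasing with `G'_k ≥ G_k`, and
`x_{k+1}` the projection of `x_k - η_k g_k` onto the closed convex set `𝒳`,
one has `∑_{k<t} r̄_k ⟨g_k, x_k - x⋆⟩ ≤ r̄_t (2 d̄_t + r̄_t) √(G'_{t-1})`. -/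
theorem dog_weighted_regret {H : Type*} [NormedAddCommGroup H]
    [InnerProductSpace ℝ H] [CompleteSpace H]
    (X : Set H) (hXconv : Convex ℝ X) (hXclosed : IsClosed X)
    (x g : ℕ → H) (xs : H) (hxs : xs ∈ X) (hx0 : x 0 ∈ X)
    (rε : ℝ) (hrε : 0 < rε)
    (rbar : ℕ → ℝ)
    (hrbar : ∀ k, rbar k =
      max ((Finset.range (k + 1)).sup' Finset.nonempty_range_add_one
            (fun i => ‖x i - x 0‖)) rε)
    (G' : ℕ → ℝ)
    (hG'pos : ∀ k, 0 < G' k)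
    (hG'mono : ∀ k, G' k ≤ G' (k + 1))
    (hG'ge : ∀ k, (∑ i ∈ Finset.range (k + 1), ‖g i‖ ^ 2) ≤ G' k)
    (hmem : ∀ k, x (k + 1) ∈ X)
    (hproj : ∀ k, ∀ y ∈ X,
      ‖x (k + 1) - (x k - (rbar k / Real.sqrt (G' k)) • g k)‖
        ≤ ‖y - (x k - (rbar k / Real.sqrt (G' k)) • g k)‖)
    (t : ℕ) (ht : 1 ≤ t) :
    ∑ k ∈ Finset.range t, rbar k * ⟪g k, x k - xs⟫
      ≤ rbar t *
          (2 * ((Finset.range (t + 1)).sup' Finset.nonempty_range_add_one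
                  (fun k => ‖x k - xs‖)) + rbar t)
            * Real.sqrt (G' (t - 1)) :=
  dog_weighted_regret_general X hXconv x g xs hxs rε rbar hrbar G' hG'pos hG'mono hG'ge hmem hproj t
    ht
end

section
/- Noiseless T-DoG stability (one induction step): let $f$ be convex with minimizer $x^\star$, iterates $x_{k+1} = x_k - \eta_k \nabla f(x_k)$ with $\eta_k = \bar{r}_k/\sqrt{G_k'}$ where $\bar{r}_k = \max(\max_{i\le k}\|x_i - x_0\|, r_\epsilon)$ and $G_k' \ge 8^4\,(G_k + \bar{L}_k^2)\,(1 + \log\frac{G_k + \bar{L}_k^2}{\bar{L}_0^2})^2$ where $G_k = \sum_{i\le k}\|\nabla f(x_i)\|^2$ and $\bar{L}_k \ge \max_{i \le k}\|\nabla f(x_i)\|$ with $\bar{L}_0 > 0$. If $r_\epsilon \le 3 d_0$ where $d_0 = \|x_0 - x^\star\|$, then for all $t$, $\max_{k \le t}\|x_k - x_0\| \le 3 d_0$. -/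
open Finset Real
open scoped RealInnerProductSpace

/-!
Since `⟪∇f(x_k), x_k - x⋆⟫ ≥ 0` by convexity, a gradient step increases the squared distance to
`x⋆` by at most `η_k² ‖∇f(x_k)‖²`, so `d_{t+1}² ≤ d₀² + ∑_{k ≤ t} r̄_k² ‖∇f(x_k)‖² / G'_k`.
Writing `a_k = G_k + L̄_k²` and `a_{-1} = L̄₀²`, the gradient terms `‖∇f(x_k)‖² ≤ a_k - a_{k-1}`
are controlled by `G'_k`, and the discrete form of `∫ dx / (x (1 + log (x / a_{-1}))²) ≤ 1`
bounds their sum by `8⁻⁴`. Inductively, `r̄_k ≤ 3 d₀` for `k ≤ t` then gives `d_{t+1} ≤ 2 d₀`,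
hence `‖x_{t+1} - x₀‖ ≤ 3 d₀`.
-/

lemma one_le_one_add_log_div {a c : ℝ} (hc : 0 < c) (hca : c ≤ a) : 1 ≤ 1 + log (a / c) := by
  have : 0 ≤ log (a / c) := log_nonneg ((one_le_div hc).mpr hca)
  linarith

lemma sub_div_mul_one_add_log_sq_le {a b c : ℝ} (hc : 0 < c) (hca : c ≤ a) (hab : a ≤ b) :
    (b - a) / (b * (1 + log (b / c)) ^ 2) ≤ (1 + log (a / c))⁻¹ - (1 + log (b / c))⁻¹ := by
  have ha : 0 < a := hc.trans_le hca
  have hb : 0 < b := ha.trans_le hab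
  set u := 1 + log (a / c)
  set v := 1 + log (b / c)
  have hu : 1 ≤ u := one_le_one_add_log_div hc hca
  have hv_sub_u : v - u = log (b / a) := by
    simp only [u, v, log_div hb.ne' hc.ne', log_div ha.ne' hc.ne', log_div hb.ne' ha.ne']
    ring
  have hvu : (b - a) / b ≤ v - u := by
    rw [hv_sub_u, sub_div, div_self hb.ne', ← inv_div]
    exact one_sub_inv_le_log_of_pos (div_pos hb ha)
  have huv : u ≤ v := by linarith [div_nonneg (sub_nonneg.mpr hab) hb.le]
  have hu₀ : 0 < u := by linarith
  have hv₀ : 0 < v := by linarith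
  calc (b - a) / (b * v ^ 2) = (b - a) / b / v ^ 2 := (div_div _ _ _).symm
    _ ≤ (v - u) / v ^ 2 := by gcongr
    _ ≤ (v - u) / (u * v) := by
        rw [sq]
        gcongr
    _ = u⁻¹ - v⁻¹ := by field_simp

lemma sum_sub_div_mul_one_add_log_sq_le_one {a : ℕ → ℝ} (h₀ : 0 < a 0) (ha : Monotone a)
    (n : ℕ) :
    ∑ k ∈ range n, (a (k + 1) - a k) / (a (k + 1) * (1 + log (a (k + 1) / a 0)) ^ 2) ≤ 1 := by
  calc _ ≤ ∑ k ∈ range n, ((1 + log (a k / a 0))⁻¹ - (1 + log (a (k + 1) / a 0))⁻¹) :=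
        sum_le_sum fun k _ =>
          sub_div_mul_one_add_log_sq_le h₀ (ha k.zero_le) (ha k.le_succ)
    _ = 1 - (1 + log (a n / a 0))⁻¹ := by
        rw [sum_range_sub', div_self h₀.ne', log_one, add_zero, inv_one]
    _ ≤ 1 := by
        have := one_le_one_add_log_div h₀ (ha n.zero_le)
        exact sub_le_self _ (by positivity)

lemma sum_sq_div_le_of_le_mul_one_add_log_sq {γ G L G' : ℕ → ℝ}
    (hG : ∀ k, G k = ∑ i ∈ range (k + 1), γ i ^ 2) (hL : Monotone L) (hL₀ : 0 < L 0)
    (hG' : ∀ k, 8 ^ 4 * (G k + L k ^ 2) * (1 + log ((G k + L k ^ 2) / L 0 ^ 2)) ^ 2 ≤ G' k)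
    (n : ℕ) :
    ∑ k ∈ range n, γ k ^ 2 / G' k ≤ (8 ^ 4)⁻¹ := by
  -- `a (k + 1)` is the paper's `a_k`, and `a 0` its `a_{-1}`
  let a : ℕ → ℝ := fun
    | 0 => L 0 ^ 2
    | k + 1 => G k + L k ^ 2
  have hgap : ∀ k, γ k ^ 2 ≤ a (k + 1) - a k := by
    rintro (_ | k)
    · simp [a, hG]
    · have : L k ^ 2 ≤ L (k + 1) ^ 2 :=
        pow_le_pow_left₀ (hL₀.le.trans (hL k.zero_le)) (hL k.le_succ) 2
      simp only [a, hG, sum_range_succ _ (k + 1)]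
      linarith
  have ha : Monotone a := monotone_nat_of_le_succ fun k => by linarith [hgap k, sq_nonneg (γ k)]
  have ha₀ : 0 < a 0 := by positivity
  calc ∑ k ∈ range n, γ k ^ 2 / G' k
      ≤ ∑ k ∈ range n, (8 ^ 4)⁻¹ *
          ((a (k + 1) - a k) / (a (k + 1) * (1 + log (a (k + 1) / a 0)) ^ 2)) := by
        gcongr with k
        have := one_le_one_add_log_div ha₀ (ha (k + 1).zero_le)
        have := ha₀.trans_le (ha (k + 1).zero_le)
        calc γ k ^ 2 / G' k
            ≤ (a (k + 1) - a k) / (8 ^ 4 * a (k + 1) * (1 + log (a (k + 1) / a 0)) ^ 2) :=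
              div_le_div₀ (by linarith [hgap k, sq_nonneg (γ k)]) (hgap k) (by positivity) (hG' k)
          _ = _ := by rw [inv_mul_eq_div, div_div, mul_comm _ (8 ^ 4), mul_assoc]
    _ = (8 ^ 4)⁻¹ *
          ∑ k ∈ range n, (a (k + 1) - a k) / (a (k + 1) * (1 + log (a (k + 1) / a 0)) ^ 2) :=
        (mul_sum _ _ _).symm
    _ ≤ (8 ^ 4)⁻¹ :=
        mul_le_of_le_one_right (by norm_num) (sum_sub_div_mul_one_add_log_sq_le_one ha₀ ha n)

section InnerProductSpace

variable {E : Type*} [NormedAddCommGroup E] [InnerProductSpace ℝ E]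

lemma inner_sub_nonneg_of_forall_add_inner_le {f : E → ℝ} {g y z : E}
    (hg : ∀ w, f y + ⟪g, w - y⟫ ≤ f w) (hz : f z ≤ f y) : 0 ≤ ⟪g, y - z⟫ := by
  have := hg z
  rw [← neg_sub, inner_neg_right] at this
  linarith

lemma norm_sub_smul_sub_sq_le {g y z : E} {η : ℝ} (hη : 0 ≤ η) (hg : 0 ≤ ⟪g, y - z⟫) :
    ‖y - η • g - z‖ ^ 2 ≤ ‖y - z‖ ^ 2 + η ^ 2 * ‖g‖ ^ 2 := by
  rw [sub_right_comm, norm_sub_sq_real, real_inner_smul_right, real_inner_comm, norm_smul,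
    norm_of_nonneg hη]
  nlinarith [mul_nonneg hη hg]

end InnerProductSpace

lemma norm_sub_zero_le_three_mul_of_sq_norm_sub_le {E : Type*} [SeminormedAddCommGroup E]
    {x : ℕ → E} {xs : E} {r q : ℕ → ℝ} (hr : ∀ k, 0 ≤ r k) (hq : ∀ k, 0 ≤ q k)
    (hsum : ∀ n, ∑ k ∈ range n, q k ≤ 1 / 3)
    (hdesc : ∀ k, ‖x (k + 1) - xs‖ ^ 2 ≤ ‖x k - xs‖ ^ 2 + r k ^ 2 * q k)
    (hr_le : ∀ k, (∀ i ≤ k, ‖x i - x 0‖ ≤ 3 * ‖x 0 - xs‖) → r k ≤ 3 * ‖x 0 - xs‖) (k : ℕ) :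
    ‖x k - x 0‖ ≤ 3 * ‖x 0 - xs‖ := by
  set d₀ := ‖x 0 - xs‖
  have htel : ∀ n, ‖x n - xs‖ ^ 2 ≤ d₀ ^ 2 + ∑ k ∈ range n, r k ^ 2 * q k := by
    have : Antitone fun n => ‖x n - xs‖ ^ 2 - ∑ k ∈ range n, r k ^ 2 * q k :=
      antitone_nat_of_succ_le fun k => by rw [sum_range_succ]; linarith [hdesc k]
    intro n
    simpa using this n.zero_le
  suffices ∀ t, ∀ k ≤ t, ‖x k - x 0‖ ≤ 3 * d₀ from this k k le_rfl
  intro t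
  induction t with
  | zero =>
    intro k hk
    rw [Nat.le_zero.mp hk, sub_self, norm_zero]
    positivity
  | succ t ih =>
    intro k hk
    rcases hk.lt_or_eq with hk | rfl
    · exact ih k (Nat.lt_succ_iff.mp hk)
    have hsum_le : ∑ k ∈ range (t + 1), r k ^ 2 * q k ≤ 3 * d₀ ^ 2 := calc
      _ ≤ ∑ k ∈ range (t + 1), (3 * d₀) ^ 2 * q k := by
          gcongr with i hi
          · exact hq i
          · exact hr i
          · exact hr_le i fun j hj => ih j (hj.trans (Nat.lt_succ_iff.mp (mem_range.mp hi)))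
      _ = (3 * d₀) ^ 2 * ∑ k ∈ range (t + 1), q k := (mul_sum _ _ _).symm
      _ ≤ (3 * d₀) ^ 2 * (1 / 3) := by gcongr; exact hsum _
      _ = 3 * d₀ ^ 2 := by ring
    have hdist : ‖x (t + 1) - xs‖ ≤ 2 * d₀ :=
      (pow_le_pow_iff_left₀ (norm_nonneg _) (by positivity) two_ne_zero).mp
        (by linarith [htel (t + 1)])
    calc ‖x (t + 1) - x 0‖ ≤ ‖x (t + 1) - xs‖ + ‖xs - x 0‖ := norm_sub_le_norm_sub_add_norm_sub ..
      _ ≤ 3 * d₀ := by rw [norm_sub_rev xs]; linarith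

theorem tdog_noiseless_stability_general {H : Type*} [NormedAddCommGroup H]
    [InnerProductSpace ℝ H]
    (f : H → ℝ) (gf : H → H)
    (hconv : ∀ y z : H, f y + ⟪gf y, z - y⟫ ≤ f z)
    (xs : H) (hmin : ∀ y, f xs ≤ f y)
    (x : ℕ → H) (rε : ℝ) (hrε : 0 < rε)
    (rbar : ℕ → ℝ)
    (hrbar : ∀ k, rbar k =
      max ((Finset.range (k + 1)).sup' Finset.nonempty_range_add_one
            (fun i => ‖x i - x 0‖)) rε)
    (G : ℕ → ℝ)
    (hG : ∀ k, G k = ∑ i ∈ Finset.range (k + 1), ‖gf (x i)‖ ^ 2)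
    (Lbar : ℕ → ℝ)
    (hLmono : ∀ k, Lbar k ≤ Lbar (k + 1))
    (hL0 : 0 < Lbar 0)
    (G' : ℕ → ℝ)
    (hG'pos : ∀ k, 0 < G' k)
    (hG'ge : ∀ k,
      8 ^ 4 * (G k + Lbar k ^ 2)
          * (1 + Real.log ((G k + Lbar k ^ 2) / Lbar 0 ^ 2)) ^ 2 ≤ G' k)
    (hstep : ∀ k, x (k + 1) = x k - (rbar k / Real.sqrt (G' k)) • gf (x k))
    (hrε3 : rε ≤ 3 * ‖x 0 - xs‖) :
    ∀ k, ‖x k - x 0‖ ≤ 3 * ‖x 0 - xs‖ := by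
  have hrbar_nonneg : ∀ k, 0 ≤ rbar k := fun k => hrbar k ▸ hrε.le.trans (le_max_right _ _)
  have hsum : ∀ n, ∑ k ∈ range n, ‖gf (x k)‖ ^ 2 / G' k ≤ 1 / 3 := fun n =>
    (sum_sq_div_le_of_le_mul_one_add_log_sq hG (monotone_nat_of_le_succ hLmono) hL0 hG'ge n).trans
      (by norm_num)
  have hdesc : ∀ k,
      ‖x (k + 1) - xs‖ ^ 2 ≤ ‖x k - xs‖ ^ 2 + rbar k ^ 2 * (‖gf (x k)‖ ^ 2 / G' k) := fun k => calc
    ‖x (k + 1) - xs‖ ^ 2 ≤ ‖x k - xs‖ ^ 2 + (rbar k / √(G' k)) ^ 2 * ‖gf (x k)‖ ^ 2 :=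
        hstep k ▸ norm_sub_smul_sub_sq_le (by have := hrbar_nonneg k; positivity)
          (inner_sub_nonneg_of_forall_add_inner_le (hconv _) (hmin _))
    _ = ‖x k - xs‖ ^ 2 + rbar k ^ 2 * (‖gf (x k)‖ ^ 2 / G' k) := by
        rw [div_pow, sq_sqrt (hG'pos k).le]
        ring
  have hrbar_le : ∀ k, (∀ i ≤ k, ‖x i - x 0‖ ≤ 3 * ‖x 0 - xs‖) → rbar k ≤ 3 * ‖x 0 - xs‖ :=
    fun k hk => hrbar k ▸
      max_le (sup'_le _ _ fun i hi => hk i (Nat.lt_succ_iff.mp (mem_range.mp hi))) hrε3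
  exact norm_sub_zero_le_three_mul_of_sq_norm_sub_le hrbar_nonneg
    (fun k => div_nonneg (sq_nonneg _) (hG'pos k).le) hsum hdesc hrbar_le

/-- Noiseless T-DoG stability (Proposition 3, noiseless case): for convex `f`
with (sub)gradient selection `gf`, iterates `x_{k+1} = x_k - η_k gf(x_k)` with
`η_k = r̄_k / √(G'_k)`, where `G'_k ≥ 8⁴ (G_k + L̄_k²)(1 + log((G_k + L̄_k²)/L̄₀²))²`,
`G_k = ∑_{i ≤ k} ‖gf(x_i)‖²`, and `L̄` a nondecreasing bound on the observed
gradient norms with `L̄₀ > 0`: if `r_ε ≤ 3 d₀`, then all iterates stay within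
distance `3 d₀` of `x₀`. -/
theorem tdog_noiseless_stability {H : Type*} [NormedAddCommGroup H]
    [InnerProductSpace ℝ H]
    (f : H → ℝ) (gf : H → H)
    (hconv : ∀ y z : H, f y + ⟪gf y, z - y⟫ ≤ f z)
    (xs : H) (hmin : ∀ y, f xs ≤ f y)
    (x : ℕ → H) (rε : ℝ) (hrε : 0 < rε)
    (rbar : ℕ → ℝ)
    (hrbar : ∀ k, rbar k =
      max ((Finset.range (k + 1)).sup' Finset.nonempty_range_add_one
            (fun i => ‖x i - x 0‖)) rε)
    (G : ℕ → ℝ)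
    (hG : ∀ k, G k = ∑ i ∈ Finset.range (k + 1), ‖gf (x i)‖ ^ 2)
    (Lbar : ℕ → ℝ)
    (hLbar : ∀ k, ∀ i ≤ k, ‖gf (x i)‖ ≤ Lbar k)
    (hLmono : ∀ k, Lbar k ≤ Lbar (k + 1))
    (hL0 : 0 < Lbar 0)
    (G' : ℕ → ℝ)
    (hG'pos : ∀ k, 0 < G' k)
    (hG'ge : ∀ k,
      8 ^ 4 * (G k + Lbar k ^ 2)
          * (1 + Real.log ((G k + Lbar k ^ 2) / Lbar 0 ^ 2)) ^ 2 ≤ G' k)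
    (hstep : ∀ k, x (k + 1) = x k - (rbar k / Real.sqrt (G' k)) • gf (x k))
    (hrε3 : rε ≤ 3 * ‖x 0 - xs‖) :
    ∀ k, ‖x k - x 0‖ ≤ 3 * ‖x 0 - xs‖ :=
  tdog_noiseless_stability_general f gf hconv xs hmin x rε hrε rbar hrbar G hG Lbar hLmono hL0 G'
    hG'pos hG'ge hstep hrε3
end

section
/- Smooth noiseless DoG rate: if $f$ is convex with $S$-Lipschitz gradient, minimized at $x^\star$, then for any sequence $x_0,\ldots,x_{T-1}$ with $\frac{1}{T}\sum_{t=0}^{T-1}(f(x_t) - f(x^\star)) \le \frac{C\sqrt{G_{T-1}}}{T}$ where $G_{T-1} = \sum_{t=0}^{T-1}\|\nabla f(x_t)\|^2$ and $C \ge 0$, it holds that $\frac{1}{T}\sum_{t=0}^{T-1}(f(x_t) - f(x^\star)) \le \frac{2 S C^2}{T}$. -/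
open Finset
open scoped RealInnerProductSpace

/-! A subgradient field `gf` of `f` that is `S`-Lipschitz satisfies the descent inequality
`f (y + d) ≤ f y + ⟪gf y, d⟫ + S/2 ‖d‖²`; no differentiability is needed, since the subgradient
inequality along a uniform partition of `[y, y + d]` bounds `f (y + d) - f y` by a Riemann sum of
`t ↦ ⟪gf (y + t d), d⟫`. Descending by `d = -gf y / S` and comparing with the minimum gives
`‖gf y‖² ≤ 2 S (f y - f x⋆)`, so `G ≤ 2 S T A` for the average gap `A`. With `T A ≤ C √G` this yields
`(T A)² ≤ 2 S C² (T A)`, i.e. `A ≤ 2 S C² / T`. -/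

theorem sum_range_natCast_add_one (n : ℕ) :
    ∑ k ∈ range n, ((k : ℝ) + 1) = n * (n + 1) / 2 := by
  have := Finset.sum_range_id_mul_two (n + 1)
  rw [Finset.sum_range_succ'] at this
  simp only [add_zero, add_tsub_cancel_right] at this
  have h : ((∑ k ∈ range n, (k + 1) : ℕ) : ℝ) * 2 = (n + 1 : ℕ) * n := by exact_mod_cast this
  push_cast at h
  linarith

section Descent

variable {H : Type*} [NormedAddCommGroup H] [InnerProductSpace ℝ H]
  {f : H → ℝ} {gf : H → H} {S : ℝ}

theorem sub_le_of_subgradient_lipschitz_step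
    (hconv : ∀ y z : H, f y + ⟪gf y, z - y⟫ ≤ f z)
    (hlip : ∀ y z : H, ‖gf y - gf z‖ ≤ S * ‖y - z‖) (y d : H) (N : ℝ) (hN : 0 < N) (k : ℝ)
    (hk : 0 ≤ k) :
    f (y + ((k + 1) / N) • d) - f (y + (k / N) • d)
      ≤ (⟪gf y, d⟫ + S * ((k + 1) / N) * ‖d‖ ^ 2) / N := by
  set w := y + ((k + 1) / N) • d
  have hstep : w - (y + (k / N) • d) = (1 / N) • d := by
    simp only [w]; rw [add_div, add_smul]; field_simp; abel
  have hdist : ‖w - y‖ = (k + 1) / N * ‖d‖ := by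
    simp only [w, add_sub_cancel_left, norm_smul, Real.norm_eq_abs]
    rw [abs_of_nonneg (by positivity)]
  have hdrift : ⟪gf w - gf y, d⟫ ≤ S * ((k + 1) / N) * ‖d‖ ^ 2 :=
    calc ⟪gf w - gf y, d⟫ ≤ ‖gf w - gf y‖ * ‖d‖ := real_inner_le_norm _ _
      _ ≤ S * ‖w - y‖ * ‖d‖ := by gcongr; exact hlip w y
      _ = S * ((k + 1) / N) * ‖d‖ ^ 2 := by rw [hdist]; ring
  calc f w - f (y + (k / N) • d) ≤ ⟪gf w, w - (y + (k / N) • d)⟫ := by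
        have := hconv w (y + (k / N) • d)
        rw [← neg_sub, inner_neg_right] at this
        linarith
    _ = (⟪gf y, d⟫ + ⟪gf w - gf y, d⟫) / N := by
        rw [hstep, real_inner_smul_right, inner_sub_left]; ring
    _ ≤ (⟪gf y, d⟫ + S * ((k + 1) / N) * ‖d‖ ^ 2) / N := by gcongr

theorem sub_le_of_subgradient_lipschitz_riemann
    (hconv : ∀ y z : H, f y + ⟪gf y, z - y⟫ ≤ f z)
    (hlip : ∀ y z : H, ‖gf y - gf z‖ ≤ S * ‖y - z‖) (y d : H) (n : ℕ) :
    f (y + d) - f y ≤ ⟪gf y, d⟫ + S / 2 * ‖d‖ ^ 2 * (1 + 1 / ((n : ℝ) + 1)) := by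
  set N : ℝ := (n : ℝ) + 1
  have hN : 0 < N := by positivity
  have htele : f (y + d) - f y
      = ∑ k ∈ range (n + 1), (f (y + (((k : ℝ) + 1) / N) • d) - f (y + ((k : ℝ) / N) • d)) := by
    have := Finset.sum_range_sub (fun k : ℕ => f (y + ((k : ℝ) / N) • d)) (n + 1)
    push_cast at this
    rw [this, div_self hN.ne']
    simp
  have hsteps := Finset.sum_le_sum fun k (_ : k ∈ range (n + 1)) =>
    sub_le_of_subgradient_lipschitz_step hconv hlip y d N hN k k.cast_nonneg
  have hgauss := sum_range_natCast_add_one (n + 1)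
  push_cast at hgauss
  rw [htele]
  refine hsteps.trans (le_of_eq ?_)
  rw [← Finset.sum_div, Finset.sum_add_distrib, Finset.sum_const, card_range]
  simp_rw [mul_assoc S, mul_comm _ (‖d‖ ^ 2), ← mul_assoc S, ← Finset.mul_sum, ← Finset.sum_div,
    hgauss]
  simp only [N, nsmul_eq_mul]
  push_cast
  field_simp

theorem le_add_inner_add_of_subgradient_lipschitz
    (hconv : ∀ y z : H, f y + ⟪gf y, z - y⟫ ≤ f z)
    (hlip : ∀ y z : H, ‖gf y - gf z‖ ≤ S * ‖y - z‖) (y d : H) :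
    f (y + d) ≤ f y + ⟪gf y, d⟫ + S / 2 * ‖d‖ ^ 2 := by
  have hlim : Filter.Tendsto (fun n : ℕ => ⟪gf y, d⟫ + S / 2 * ‖d‖ ^ 2 * (1 + 1 / ((n : ℝ) + 1)))
      Filter.atTop (nhds (⟪gf y, d⟫ + S / 2 * ‖d‖ ^ 2 * (1 + 0))) :=
    ((tendsto_one_div_add_atTop_nhds_zero_nat.const_add 1).const_mul _).const_add _
  have := ge_of_tendsto' hlim (sub_le_of_subgradient_lipschitz_riemann hconv hlip y d)
  linarith

theorem norm_sq_le_two_mul_sub_of_subgradient_lipschitz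
    (hS : 0 ≤ S) (hconv : ∀ y z : H, f y + ⟪gf y, z - y⟫ ≤ f z)
    (hlip : ∀ y z : H, ‖gf y - gf z‖ ≤ S * ‖y - z‖) {xs : H} (hmin : ∀ y, f xs ≤ f y) (y : H) :
    ‖gf y‖ ^ 2 ≤ 2 * S * (f y - f xs) := by
  rcases hS.eq_or_lt with rfl | hSpos
  · -- with `S = 0` the subgradient field is constant, so it vanishes at the minimizer
    have hconst : gf (xs - gf y) = gf y := by
      simpa [sub_eq_zero] using hlip (xs - gf y) y
    have := hconv (xs - gf y) xs
    rw [hconst, sub_sub_cancel, real_inner_self_eq_norm_sq] at this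
    linarith [hmin (xs - gf y)]
  · set z := y + -(1 / S) • gf y
    have hdecrease : f z ≤ f y - ‖gf y‖ ^ 2 / (2 * S) := by
      have := le_add_inner_add_of_subgradient_lipschitz hconv hlip y (-(1 / S) • gf y)
      rw [real_inner_smul_right, real_inner_self_eq_norm_sq, norm_smul, norm_neg,
        Real.norm_eq_abs, abs_of_pos (one_div_pos.2 hSpos)] at this
      convert this using 1
      field_simp
      ring
    have hgap : ‖gf y‖ ^ 2 / (2 * S) ≤ f y - f xs := by linarith [hmin z]
    rw [div_le_iff₀ (by positivity)] at hgap
    linarith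

end Descent

theorem le_sq_mul_of_le_mul_sqrt {A B C K : ℝ} (hA : 0 ≤ A) (hB : 0 ≤ B) (hK : 0 ≤ K)
    (hBA : B ≤ K * A) (h : A ≤ C * Real.sqrt B) : A ≤ C ^ 2 * K := by
  have hsq : A * A ≤ C ^ 2 * K * A :=
    calc A * A = A ^ 2 := by ring
      _ ≤ (C * Real.sqrt B) ^ 2 := pow_le_pow_left₀ hA h 2
      _ = C ^ 2 * B := by rw [mul_pow, Real.sq_sqrt hB]
      _ ≤ C ^ 2 * K * A := by rw [mul_assoc]; gcongr
  rcases hA.eq_or_lt with rfl | hApos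
  · positivity
  · exact le_of_mul_le_mul_right hsq hApos

theorem smooth_noiseless_rate_general {H : Type*} [NormedAddCommGroup H]
    [InnerProductSpace ℝ H]
    (f : H → ℝ) (gf : H → H) (S : ℝ) (hS : 0 ≤ S)
    (hconv : ∀ y z : H, f y + ⟪gf y, z - y⟫ ≤ f z)
    (hlip : ∀ y z : H, ‖gf y - gf z‖ ≤ S * ‖y - z‖)
    (xs : H) (hmin : ∀ y, f xs ≤ f y)
    (T : ℕ) (hT : 1 ≤ T) (x : ℕ → H) (C : ℝ)
    (hbound : (1 / (T : ℝ)) * ∑ t ∈ Finset.range T, (f (x t) - f xs)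
      ≤ C * Real.sqrt (∑ t ∈ Finset.range T, ‖gf (x t)‖ ^ 2) / T) :
    (1 / (T : ℝ)) * ∑ t ∈ Finset.range T, (f (x t) - f xs)
      ≤ 2 * S * C ^ 2 / T := by
  set gap := ∑ t ∈ range T, (f (x t) - f xs)
  set G := ∑ t ∈ range T, ‖gf (x t)‖ ^ 2
  have hTpos : (0 : ℝ) < T := by exact_mod_cast hT
  have hgap : 0 ≤ gap := sum_nonneg fun t _ => sub_nonneg.2 (hmin (x t))
  have hG : G ≤ 2 * S * gap := by
    rw [mul_sum]
    exact sum_le_sum fun t _ =>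
      norm_sq_le_two_mul_sub_of_subgradient_lipschitz hS hconv hlip hmin (x t)
  have hgap_le : gap ≤ C * Real.sqrt G := by
    have := mul_le_mul_of_nonneg_left hbound hTpos.le
    rwa [← mul_assoc, mul_one_div_cancel hTpos.ne', one_mul, mul_div_cancel₀ _ hTpos.ne'] at this
  have hrate := le_sq_mul_of_le_mul_sqrt hgap (sum_nonneg fun t _ => sq_nonneg _)
    (by positivity) hG hgap_le
  rw [one_div_mul_eq_div]
  gcongr
  linarith

/-- Smooth noiseless DoG rate: if `f` is convex with `S`-Lipschitz gradient and
the average suboptimality is at most `C √(G_{T-1}) / T` with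
`G_{T-1} = ∑_{t<T} ‖∇f(x_t)‖²`, then it is at most `2 S C² / T`. -/
theorem smooth_noiseless_rate {H : Type*} [NormedAddCommGroup H]
    [InnerProductSpace ℝ H]
    (f : H → ℝ) (gf : H → H) (S : ℝ) (hS : 0 ≤ S)
    (hconv : ∀ y z : H, f y + ⟪gf y, z - y⟫ ≤ f z)
    (hlip : ∀ y z : H, ‖gf y - gf z‖ ≤ S * ‖y - z‖)
    (xs : H) (hmin : ∀ y, f xs ≤ f y)
    (T : ℕ) (hT : 1 ≤ T) (x : ℕ → H) (C : ℝ) (hC : 0 ≤ C)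
    (hbound : (1 / (T : ℝ)) * ∑ t ∈ Finset.range T, (f (x t) - f xs)
      ≤ C * Real.sqrt (∑ t ∈ Finset.range T, ‖gf (x t)‖ ^ 2) / T) :
    (1 / (T : ℝ)) * ∑ t ∈ Finset.range T, (f (x t) - f xs)
      ≤ 2 * S * C ^ 2 / T :=
  smooth_noiseless_rate_general f gf S hS hconv hlip xs hmin T hT x C hbound
end
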